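/- Let Γ be a discrete group and A ⊆ B a Γ-tight inclusion of Γ-operator algebras. Then the canonical inclusion A ⊆ Γ ⋉ B into the reduced crossed product is also Γ-tight. -/

import Mathlib

/-!
Let `φ : A → Γ ⋉ B` be an equivariant ucp map. Its compression `E₀ ∘ φ` is an equivariant ucp
map `A → B`, hence is the inclusion by tightness. The inclusion is multiplicative, so the
Kadison–Schwarz inequality for `E₀ ∘ φ` is an equality at every `a`; as the defect of a composite
dominates the defect of `E₀` at `φ a`, the latter vanishes too. Thus `φ a` lies in the
multiplicative domain of `E₀`, which gives `E₀ ((φ a - a)⋆ (φ a - a)) = 0`, and `φ a = a` by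
faithfulness. All positivity here is formal (sums of `b⋆ b`); that such a sum vanishes only if
each term does is seen in the completion of `B`, a C⋆-algebra.
-/

open scoped BoundedContinuousFunction ENNReal

/-- An element of a star ring is (formally) positive if it is of the form `b* * b`. -/
def StarPos {R : Type*} [NonUnitalSemiring R] [StarRing R] (a : R) : Prop :=
  ∃ b, a = star b * b

section UCP

variable {A B : Type*} [Ring A] [StarRing A] [Algebra ℂ A]
  [Ring B] [StarRing B] [Algebra ℂ B]

/-- A ℂ-linear map between unital star algebras is unital completely positive if it is
unital and all its matrix amplifications preserve positivity. -/
def IsUCP (φ : A →ₗ[ℂ] B) : Prop :=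
  φ 1 = 1 ∧ ∀ (n : ℕ) (M : Matrix (Fin n) (Fin n) A), StarPos M → StarPos (M.map φ)

/-- A unital positive ℂ-linear map between unital star algebras. -/
def IsUP (φ : A →ₗ[ℂ] B) : Prop :=
  φ 1 = 1 ∧ ∀ a : A, StarPos a → StarPos (φ a)

/-- Equivariance of a linear map with respect to actions of `G`. -/
def IsEquivariant (G : Type*) [SMul G A] [SMul G B] (φ : A →ₗ[ℂ] B) : Prop :=
  ∀ (g : G) (a : A), φ (g • a) = g • φ a

/-- An inclusion (embedding) `ι : A → B` of `G`-operator algebras is `G`-tight if the only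
`G`-equivariant ucp map `A → B` is the inclusion itself. -/
def IsTight (G : Type*) [SMul G A] [SMul G B] (ι : A →⋆ₐ[ℂ] B) : Prop :=
  ∀ φ : A →ₗ[ℂ] B, IsUCP φ → IsEquivariant G φ → φ = ι.toAlgHom.toLinearMap

end UCP

namespace UniformSpace.Completion

variable {R : Type*} [NormedRing R] [StarRing R] [CStarRing R]

noncomputable instance : Star (Completion R) where
  star := Completion.map star

theorem coe_star (r : R) : ((star r : R) : Completion R) = star (r : Completion R) :=
  (map_coe star_isometry.uniformContinuous r).symm

instance : ContinuousStar (Completion R) where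
  continuous_star := continuous_map

noncomputable instance : StarRing (Completion R) where
  star_involutive x := by
    refine induction_on x (isClosed_eq (by fun_prop) continuous_id) fun r => ?_
    rw [← coe_star, ← coe_star, star_star]
  star_add x y := by
    refine induction_on₂ x y (isClosed_eq (by fun_prop) (by fun_prop)) fun r s => ?_
    rw [← coe_add, ← coe_star, ← coe_star, ← coe_star, star_add, coe_add]
  star_mul x y := by
    refine induction_on₂ x y (isClosed_eq (by fun_prop) (by fun_prop)) fun r s => ?_
    rw [← coe_mul, ← coe_star, ← coe_star, ← coe_star, star_mul, coe_mul]

instance : NormedStarGroup (Completion R) where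
  norm_star_le x := by
    refine induction_on x (isClosed_le (by fun_prop) continuous_norm) fun r => ?_
    rw [← coe_star, norm_coe, norm_coe, norm_star]

instance : CStarRing (Completion R) where
  norm_mul_self_le x := by
    refine induction_on x (isClosed_le (by fun_prop) (by fun_prop)) fun r => ?_
    rw [← coe_star, ← coe_mul, norm_coe, norm_coe]
    exact CStarRing.norm_mul_self_le r

variable [NormedAlgebra ℂ R] [StarModule ℂ R]

noncomputable instance : NormedAlgebra ℂ (Completion R) where
  norm_smul_le := norm_smul_le

instance : StarModule ℂ (Completion R) where
  star_smul z x := by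
    refine induction_on x (isClosed_eq (continuous_star.comp (continuous_const_smul z))
      ((continuous_const_smul _).comp continuous_star)) fun r => ?_
    rw [← coe_smul, ← coe_star, ← coe_star, ← coe_smul, star_smul]

noncomputable instance : CStarAlgebra (Completion R) := { }

end UniformSpace.Completion

open UniformSpace in
theorem CStarRing.eq_zero_of_sum_star_mul_self_eq_zero {R : Type*} [NormedRing R] [StarRing R]
    [CStarRing R] [NormedAlgebra ℂ R] [StarModule ℂ R] {ι : Type*} [Fintype ι] {b : ι → R}
    (h : ∑ i, star (b i) * b i = 0) (i : ι) : b i = 0 := by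
  let _ := CStarAlgebra.spectralOrder (Completion R)
  have := CStarAlgebra.spectralOrderedRing (Completion R)
  have hc : ∑ k, star (b k : Completion R) * b k = 0 := by
    have h' := congrArg (Completion.coeRingHom (α := R)) h
    rw [map_sum, map_zero] at h'
    simpa [Completion.coeRingHom, ← Completion.coe_star, ← Completion.coe_mul] using h'
  have hi := (Finset.sum_eq_zero_iff_of_nonneg fun k _ => star_mul_self_nonneg _).mp hc i
    (Finset.mem_univ i)
  rw [← norm_eq_zero, ← Completion.norm_coe, ← mul_self_eq_zero, ← CStarRing.norm_star_mul_self,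
    hi, norm_zero]

theorem sum_star_sub_mul_sub {R ι : Type*} [Ring R] [StarRing R] [Fintype ι] (p q r : ι → R)
    (hp : ∑ k, star (p k) * p k = 1) :
    ∑ k, star (q k - p k * ∑ l, star (p l) * q l) * (r k - p k * ∑ l, star (p l) * r l) =
      ∑ k, star (q k) * r k - star (∑ k, star (p k) * q k) * ∑ k, star (p k) * r k := by
  set c := ∑ l, star (p l) * q l
  set d := ∑ l, star (p l) * r l with hd
  have hqp : ∑ k, star (q k) * p k = star c := by simp [c, star_sum]
  have hterm : ∀ k, star (q k - p k * c) * (r k - p k * d) = star (q k) * r k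
      - star (q k) * p k * d - star c * (star (p k) * r k) + star c * (star (p k) * p k) * d := by
    intro k
    simp only [star_sub, star_mul]
    noncomm_ring
  simp only [hterm, Finset.sum_add_distrib, Finset.sum_sub_distrib, ← Finset.sum_mul,
    ← Finset.mul_sum, ← hd, hqp, hp]
  noncomm_ring

section UCP

variable {X Y Z : Type*} [Ring X] [StarRing X] [Algebra ℂ X]
  [Ring Y] [StarRing Y] [Algebra ℂ Y] [Ring Z] [StarRing Z] [Algebra ℂ Z]

theorem IsUCP.comp {φ : X →ₗ[ℂ] Y} {ψ : Y →ₗ[ℂ] Z} (hφ : IsUCP φ) (hψ : IsUCP ψ) :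
    IsUCP (ψ.comp φ) := by
  refine ⟨by simp [hφ.1, hψ.1], fun n M hM => ?_⟩
  simpa [Matrix.map_map] using hψ.2 n (M.map φ) (hφ.2 n M hM)

theorem IsUCP.isUP {ψ : X →ₗ[ℂ] Y} (h : IsUCP ψ) : IsUP ψ := by
  refine ⟨h.1, fun x ⟨y, hy⟩ => ?_⟩
  obtain ⟨N, hN⟩ := h.2 1 (Matrix.of fun _ _ => x) ⟨Matrix.of fun _ _ => y, by
    ext; simp [Matrix.mul_apply, hy]⟩
  exact ⟨N 0 0, by simpa [Matrix.mul_apply] using congrFun (congrFun hN 0) 0⟩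

theorem IsUCP.exists_map_star_mul_eq_sum {ψ : X →ₗ[ℂ] Y} (h : IsUCP ψ) {n : ℕ}
    (w : Fin (n + 1) → X) :
    ∃ N : Fin (n + 1) → Fin (n + 1) → Y, ∀ i j,
      ψ (star (w i) * w j) = ∑ k, star (N k i) * N k j := by
  obtain ⟨N, hN⟩ := h.2 (n + 1) (Matrix.of fun i j => star (w i) * w j)
    ⟨Matrix.of fun k j => if k = 0 then w j else 0, by
      ext i j
      simp [Matrix.mul_apply, Finset.sum_ite_eq']⟩
  exact ⟨N, fun i j => by simpa [Matrix.mul_apply] using congrFun (congrFun hN i) j⟩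

theorem IsUCP.exists_map_star_mul_eq_add_sum {ψ : X →ₗ[ℂ] Y} (h : IsUCP ψ) {m : ℕ}
    (v : Fin m → X) : ∃ M : Fin (m + 1) → Fin m → Y, ∀ i j,
      ψ (star (v i) * v j) = star (ψ (v i)) * ψ (v j) + ∑ k, star (M k i) * M k j := by
  obtain ⟨N, hN⟩ := h.exists_map_star_mul_eq_sum (Fin.cons 1 v)
  have hN0 : ∑ k, star (N k 0) * N k 0 = 1 := by simpa [h.1] using (hN 0 0).symm
  have hNv : ∀ i, ∑ k, star (N k 0) * N k i.succ = ψ (v i) := fun i => by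
    simpa using (hN 0 i.succ).symm
  -- `N` factors the Gram matrix of `(1, v)`; the defect is what is left of its columns after
  -- removing their components along the first one.
  refine ⟨fun k i => N k i.succ - N k 0 * ψ (v i), fun i j => ?_⟩
  have hgram := sum_star_sub_mul_sub (fun k => N k 0) (fun k => N k i.succ)
    (fun k => N k j.succ) hN0
  simp only [hNv] at hgram
  rw [hgram, ← Fin.cons_succ (α := fun _ => X) 1 v i, ← Fin.cons_succ (α := fun _ => X) 1 v j,
    hN]
  abel

end UCP

section CStar

variable {X Z B : Type*} [Ring X] [StarRing X] [Algebra ℂ X] [Ring Z] [StarRing Z] [Algebra ℂ Z]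
  [NormedRing B] [StarRing B] [CStarRing B] [NormedAlgebra ℂ B] [StarModule ℂ B]

theorem IsUCP.map_star_mul_eq_of_map_star_mul_self_eq {ψ : X →ₗ[ℂ] B} (h : IsUCP ψ) {x : X}
    (hx : ψ (star x * x) = star (ψ x) * ψ x) (y : X) :
    ψ (star x * y) = star (ψ x) * ψ y ∧ ψ (star y * x) = star (ψ y) * ψ x := by
  obtain ⟨M, hM⟩ := h.exists_map_star_mul_eq_add_sum ![x, y]
  have hM0 : ∀ k, M k 0 = 0 := CStarRing.eq_zero_of_sum_star_mul_self_eq_zero <| by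
    simpa [hx] using hM 0 0
  constructor
  · simpa [hM0] using hM 0 1
  · simpa [hM0] using hM 1 0

theorem IsUCP.map_star_mul_self_eq_of_comp {φ : X →ₗ[ℂ] Z} {ψ : Z →ₗ[ℂ] B} (hφ : IsUCP φ)
    (hψ : IsUCP ψ) {x : X} (hx : ψ (φ (star x * x)) = star (ψ (φ x)) * ψ (φ x)) :
    ψ (star (φ x) * φ x) = star (ψ (φ x)) * ψ (φ x) := by
  obtain ⟨D, hD⟩ := hφ.exists_map_star_mul_eq_add_sum ![x]
  obtain ⟨W, hW⟩ := hψ.exists_map_star_mul_eq_add_sum ![φ x]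
  choose V hV using fun k => hψ.isUP.2 _ ⟨D k 0, rfl⟩
  have hWx : ψ (star (φ x) * φ x) = star (ψ (φ x)) * ψ (φ x) + ∑ l, star (W l 0) * W l 0 := by
    simpa using hW 0 0
  have hsum : ∑ i : Fin 2 ⊕ Fin 2, star (Sum.elim (W · 0) V i) * Sum.elim (W · 0) V i = 0 := by
    have hDx : φ (star x * x) = star (φ x) * φ x + ∑ k, star (D k 0) * D k 0 := by
      simpa using hD 0 0
    rw [hDx, map_add, map_sum, hWx, add_assoc, add_eq_left] at hx
    simpa [Fintype.sum_sum_type, hV] using hx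
  have hW0 : ∀ l, W l 0 = 0 := fun l =>
    CStarRing.eq_zero_of_sum_star_mul_self_eq_zero hsum (Sum.inl l)
  simpa [hW0] using hWx

theorem IsUCP.eq_of_map_star_mul_self_eq {E : Z →ₗ[ℂ] B} (hE : IsUCP E) (j : B →⋆ₐ[ℂ] Z)
    (hEj : ∀ b, E (j b) = b) (hfaith : ∀ z, E (star z * z) = 0 → z = 0) {x : Z}
    (hx : E (star x * x) = star (E x) * E x) : x = j (E x) := by
  set y := j (E x)
  obtain ⟨hxy, hyx⟩ := hE.map_star_mul_eq_of_map_star_mul_self_eq hx y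
  have hy : E y = E x := hEj _
  have hyy : E (star y * y) = star (E x) * E x := by rw [← map_star, ← map_mul, hEj]
  refine (sub_eq_zero.mp (hfaith _ ?_)).symm
  rw [star_sub, sub_mul, mul_sub, mul_sub, map_sub, map_sub, map_sub, hx, hxy, hyx, hyy, hy]
  abel

end CStar

theorem stmt_10_general {Γ A B CP : Type*} [Group Γ]
    [NormedRing A] [StarRing A] [NormedAlgebra ℂ A]
    [NormedRing B] [StarRing B] [CStarRing B] [NormedAlgebra ℂ B] [StarModule ℂ B]
    [NormedRing CP] [StarRing CP] [NormedAlgebra ℂ CP]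
    [MulSemiringAction Γ A] [MulSemiringAction Γ B] [MulSemiringAction Γ CP]
    (ι : A →⋆ₐ[ℂ] B) (htight : IsTight Γ ι)
    (j : B →⋆ₐ[ℂ] CP)
    (E₀ : CP →ₗ[ℂ] B) (hE₀ucp : IsUCP E₀) (hE₀eq : IsEquivariant Γ E₀)
    (hE₀proj : ∀ b : B, E₀ (j b) = b)
    (hE₀faith : ∀ x : CP, E₀ (star x * x) = 0 → x = 0) :
    IsTight Γ (j.comp ι) := by
  intro φ hφ hφeq
  have hE : ∀ a, E₀ (φ a) = ι a := LinearMap.congr_fun <|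
    htight _ (hφ.comp hE₀ucp) fun g a => by simp [hφeq g a, hE₀eq g (φ a)]
  refine LinearMap.ext fun a => ?_
  have hSchwarz : E₀ (star (φ a) * φ a) = star (E₀ (φ a)) * E₀ (φ a) :=
    hφ.map_star_mul_self_eq_of_comp hE₀ucp (by rw [hE, hE, map_mul, map_star])
  calc φ a = j (E₀ (φ a)) := hE₀ucp.eq_of_map_star_mul_self_eq j hE₀proj hE₀faith hSchwarz
    _ = j (ι a) := by rw [hE]

/-- If `A ⊆ B` is `Γ`-tight, then the canonical inclusion of `A` into the
reduced crossed product `Γ ⋉ B` (a C*-algebra `CP` containing `B` equivariantly, with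
canonical unitaries implementing the `Γ`-action and a faithful equivariant canonical
conditional expectation onto `B`) is `Γ`-tight. -/
theorem stmt_10 {Γ A B CP : Type*} [Group Γ]
    [NormedRing A] [StarRing A] [CStarRing A] [NormedAlgebra ℂ A] [StarModule ℂ A]
    [NormedRing B] [StarRing B] [CStarRing B] [NormedAlgebra ℂ B] [StarModule ℂ B]
    [NormedRing CP] [StarRing CP] [CStarRing CP] [NormedAlgebra ℂ CP] [StarModule ℂ CP]
    [MulSemiringAction Γ A] [MulSemiringAction Γ B] [MulSemiringAction Γ CP]
    (ι : A →⋆ₐ[ℂ] B) (htight : IsTight Γ ι)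
    (j : B →⋆ₐ[ℂ] CP) (hj_inj : Function.Injective j)
    (hj_eq : ∀ (g : Γ) (b : B), j (g • b) = g • j b)
    (u : Γ →* CPˣ)
    (hu_star : ∀ g : Γ, star ((u g : CP)) = (((u g)⁻¹ : CPˣ) : CP))
    (hAd : ∀ (g : Γ) (x : CP), g • x = (u g : CP) * x * (((u g)⁻¹ : CPˣ) : CP))
    (E₀ : CP →ₗ[ℂ] B) (hE₀ucp : IsUCP E₀) (hE₀eq : IsEquivariant Γ E₀)
    (hE₀proj : ∀ b : B, E₀ (j b) = b)
    (hE₀faith : ∀ x : CP, E₀ (star x * x) = 0 → x = 0) :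
    IsTight Γ (j.comp ι) :=
  stmt_10_general ι htight j E₀ hE₀ucp hE₀eq hE₀proj hE₀faith
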